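/- arXiv:1507.00098 — 3 statements merged into one kernel-verified Lean document; each statement's English description precedes it below -/
import Mathlib

section
/- Let e be idempotent mod m, b, c ∈ R_m^e, and D = gcd{n : 1 ≤ n ≤ |b|_m, b^n ∈ orb(c)}. Then D divides |b|_m, b^D ∈ orb(c), and for every k ≥ 1: b^k ∈ orb(c) if and only if D | k. -/
/-- `e` is an idempotent residue modulo `m`: `e^2 ≡ e (mod m)`. -/
def Idem (m : ℕ) (e : ZMod m) : Prop := e ^ 2 = e

/-- The order `|a|_m`: the least `n ≥ 1` such that `a^n` is idempotent mod `m`. -/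
noncomputable def ord (m : ℕ) (a : ZMod m) : ℕ := sInf {n | 1 ≤ n ∧ Idem m (a ^ n)}

/-- `a` is regular modulo `m`: `a^(|a|_m + 1) ≡ a (mod m)`. -/
noncomputable def Reg (m : ℕ) (a : ZMod m) : Prop := a ^ (ord m a + 1) = a

/-- `R_m^e`: the regular residues mod `m` whose idempotent power is `e`. -/
noncomputable def Rme (m : ℕ) (e : ZMod m) : Set (ZMod m) :=
  {a | Reg m a ∧ a ^ (ord m a) = e}

/-- The orbit of `a` modulo `m`: `{a^j mod m : 1 ≤ j ≤ |a|_m}`. -/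
noncomputable def orb (m : ℕ) (a : ZMod m) : Finset (ZMod m) :=
  (Finset.Icc 1 (ord m a)).image (a ^ ·)

/-! Let `t = |b|_m`, so that `b ^ (t + 1) = b` and `b ^ t = e` is idempotent. Since
`orb(c) = {c ^ j : j ≥ 1}` is a subsemigroup containing `e`, the exponents `n` with
`b ^ (n + t) ∈ orb(c)` form an additive submonoid of `ℕ` stable under `n ↦ n - t`; for `n ≥ 1`
they are exactly the `n` with `b ^ n ∈ orb(c)`. Such a submonoid is closed under `gcd` (Bézout,
with the negative coefficient made positive by adding multiples of `t`), so it contains `D`,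
and `D ∣ t` because `t` itself lies in it. Membership of `k` only depends on `k mod t`. -/

section Monoid

variable {M : Type*} [Monoid M]

theorem pow_add_mul_eq_pow_of_pow_add_eq {x : M} {i d n : ℕ} (h : x ^ (i + d) = x ^ i)
    (hn : i ≤ n) (k : ℕ) : x ^ (n + k * d) = x ^ n := by
  have step : ∀ n, i ≤ n → x ^ (n + d) = x ^ n := fun n hn => by
    obtain ⟨r, rfl⟩ := Nat.exists_eq_add_of_le hn
    rw [add_right_comm, pow_add, h, ← pow_add]
  induction k with
  | zero => simp
  | succ k ih => rw [add_mul, one_mul, ← add_assoc, step _ (by omega), ih]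

theorem exists_isIdempotentElem_pow [Finite M] (x : M) :
    ∃ n, 0 < n ∧ IsIdempotentElem (x ^ n) := by
  obtain ⟨i, j, hne, hij⟩ := Finite.exists_ne_map_eq_of_infinite (x ^ · : ℕ → M)
  wlog hlt : i < j generalizing i j
  · exact this j i hne.symm hij.symm (Nat.lt_of_le_of_ne (not_lt.1 hlt) hne.symm)
  have hper : x ^ (i + (j - i)) = x ^ i := by rw [Nat.add_sub_cancel' hlt.le]; exact hij.symm
  refine ⟨(i + 1) * (j - i), Nat.mul_pos i.succ_pos (Nat.sub_pos_of_lt hlt), ?_⟩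
  rw [IsIdempotentElem, ← pow_add]
  exact pow_add_mul_eq_pow_of_pow_add_eq hper
    (Nat.le_mul_of_pos_right _ (Nat.sub_pos_of_lt hlt) |>.trans' i.le_succ) _

theorem pow_mem_image_Icc_of_pow_succ_eq [DecidableEq M] {x : M} {s j : ℕ}
    (h : x ^ (s + 1) = x) (hs : 0 < s) (hj : 0 < j) : x ^ j ∈ (Finset.Icc 1 s).image (x ^ ·) := by
  obtain ⟨r, q, hr, rfl⟩ : ∃ r q, r ∈ Finset.Icc 1 s ∧ j = r + q * s := by
    refine ⟨(j - 1) % s + 1, (j - 1) / s, ?_, ?_⟩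
    · have := Nat.mod_lt (j - 1) hs
      simp only [Finset.mem_Icc]
      omega
    · have := Nat.mod_add_div' (j - 1) s
      omega
  refine Finset.mem_image.2 ⟨r, hr, ?_⟩
  exact (pow_add_mul_eq_pow_of_pow_add_eq (by rwa [add_comm, pow_one])
    (Finset.mem_Icc.1 hr).1 q).symm

/-- The shift by `t` makes `0` a member, so that these exponents form a submonoid. -/
def powExponents (S : Subsemigroup M) (x : M) (t : ℕ) (hx : IsIdempotentElem (x ^ t))
    (hS : x ^ t ∈ S) : AddSubmonoid ℕ where
  carrier := {n | x ^ (n + t) ∈ S}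
  add_mem' {a b} ha hb := by
    have : x ^ (a + t) * x ^ (b + t) = x ^ (a + b + t) := calc
      _ = x ^ (a + b) * (x ^ t * x ^ t) := by simp only [← pow_add]; ring_nf
      _ = x ^ (a + b + t) := by rw [hx.eq, ← pow_add]
    show x ^ (a + b + t) ∈ S
    exact this ▸ S.mul_mem ha hb
  zero_mem' := by simpa using hS

theorem pow_add_mem_powExponents_iff {S : Subsemigroup M} {x : M} {t : ℕ}
    (hx : IsIdempotentElem (x ^ t)) (hS : x ^ t ∈ S) {n : ℕ} :
    n + t ∈ powExponents S x t hx hS ↔ n ∈ powExponents S x t hx hS := by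
  show x ^ (n + t + t) ∈ S ↔ x ^ (n + t) ∈ S
  rw [add_assoc, pow_add x n (t + t), pow_add x t t, hx.eq, pow_add]

theorem mem_powExponents_iff {S : Subsemigroup M} {x : M} {t : ℕ} (hxt : x ^ (t + 1) = x)
    (hx : IsIdempotentElem (x ^ t)) (hS : x ^ t ∈ S) {n : ℕ} (hn : 0 < n) :
    n ∈ powExponents S x t hx hS ↔ x ^ n ∈ S := by
  show x ^ (n + t) ∈ S ↔ x ^ n ∈ S
  rw [← one_mul t, pow_add_mul_eq_pow_of_pow_add_eq (by rwa [add_comm, pow_one]) hn]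

end Monoid

namespace AddSubmonoid

variable {P : AddSubmonoid ℕ} {t : ℕ}

theorem mem_of_add_mul_mem (hP : ∀ n, n + t ∈ P → n ∈ P) {n : ℕ} (k : ℕ) (h : n + k * t ∈ P) :
    n ∈ P := by
  induction k with
  | zero => simpa using h
  | succ k ih => exact ih (hP _ (by rwa [add_mul, one_mul, ← add_assoc] at h))

theorem gcd_mem_of_periodic (ht : 0 < t) (hP : ∀ n, n + t ∈ P → n ∈ P) {a b : ℕ}
    (ha : a ∈ P) (hb : b ∈ P) : Nat.gcd a b ∈ P := by
  rcases Nat.eq_zero_or_pos b with rfl | hb0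
  · simpa using ha
  rcases (Nat.gcd_le_right a hb0).lt_or_eq with hlt | heq
  swap
  · rw [heq]
    exact hb
  obtain ⟨x, -, hx⟩ := Nat.exists_mul_mod_eq_gcd hlt
  -- `a * x ≡ gcd a b (mod b)`; adding `t - 1` further copies of the multiple of `b` makes the
  -- surplus over `gcd a b` a multiple of `t`, which periodicity removes.
  set q := a * x / b
  have hax : a * x = Nat.gcd a b + b * q := by rw [← hx, Nat.mod_add_div]
  refine mem_of_add_mul_mem hP (b * q) ?_
  have hsum : x • a + ((t - 1) * q) • b ∈ P := P.add_mem (P.nsmul_mem ha x) (P.nsmul_mem hb _)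
  obtain ⟨t, rfl⟩ : ∃ s, t = s + 1 := ⟨t - 1, by omega⟩
  convert hsum using 1
  simp only [smul_eq_mul, Nat.add_sub_cancel]
  linear_combination -hax

theorem finset_gcd_mem_of_periodic (ht : 0 < t) (hP : ∀ n, n + t ∈ P → n ∈ P) {ι : Type*}
    (s : Finset ι) (f : ι → ℕ) (h : ∀ i ∈ s, f i ∈ P) : s.gcd f ∈ P := by
  classical
  induction s using Finset.induction_on with
  | empty => exact P.zero_mem
  | insert i s _ ih =>
    rw [Finset.gcd_insert]
    exact gcd_mem_of_periodic ht hP (h i (s.mem_insert_self i))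
      (ih fun j hj => h j (Finset.mem_insert_of_mem hj))

theorem gcd_filter_mem_dvd_iff [DecidablePred (· ∈ P)] (ht : 0 < t)
    (hP : ∀ n, n + t ∈ P → n ∈ P) (htP : t ∈ P) (k : ℕ) :
    ((Finset.Icc 1 t).filter (· ∈ P)).gcd id ∣ k ↔ k ∈ P := by
  set D := ((Finset.Icc 1 t).filter (· ∈ P)).gcd id
  have hDP : D ∈ P := finset_gcd_mem_of_periodic ht hP _ _ fun n hn => (Finset.mem_filter.1 hn).2
  have hDt : D ∣ t := Finset.gcd_dvd (Finset.mem_filter.2 ⟨Finset.mem_Icc.2 ⟨ht, le_rfl⟩, htP⟩)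
  constructor
  · rintro ⟨q, rfl⟩
    simpa [mul_comm] using P.nsmul_mem hDP q
  · intro hk
    have hmod : k % t ∈ P := mem_of_add_mul_mem hP (k / t) (by rwa [Nat.mod_add_div'])
    rw [← Nat.dvd_mod_iff hDt]
    rcases Nat.eq_zero_or_pos (k % t) with h0 | hpos
    · rw [h0]
      exact dvd_zero D
    · exact Finset.gcd_dvd
        (Finset.mem_filter.2 ⟨Finset.mem_Icc.2 ⟨hpos, (Nat.mod_lt k ht).le⟩, hmod⟩)

end AddSubmonoid

section ZMod

variable {m : ℕ} [NeZero m]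

theorem ord_pos (a : ZMod m) : 0 < ord m a := by
  obtain ⟨n, hn, hidem⟩ := exists_isIdempotentElem_pow a
  have hne : {n | 1 ≤ n ∧ Idem m (a ^ n)}.Nonempty := ⟨n, hn, by rw [Idem, sq]; exact hidem⟩
  exact (Nat.sInf_mem hne).1

theorem pow_mem_orb {c : ZMod m} (hc : Reg m c) {j : ℕ} (hj : 0 < j) : c ^ j ∈ orb m c :=
  pow_mem_image_Icc_of_pow_succ_eq hc (ord_pos c) hj

def orbSubsemigroup {c : ZMod m} (hc : Reg m c) : Subsemigroup (ZMod m) where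
  carrier := orb m c
  mul_mem' {x y} hx hy := by
    obtain ⟨i, hi, rfl⟩ := Finset.mem_image.1 hx
    obtain ⟨j, hj, rfl⟩ := Finset.mem_image.1 hy
    rw [← pow_add]
    exact pow_mem_orb hc (by simp only [Finset.mem_Icc] at hi; omega)

end ZMod

/-- With `D = gcd{n : 1 ≤ n ≤ |b|_m, b^n ∈ orb(c)}`: `D ∣ |b|_m`, `b^D ∈ orb(c)`,
and for every `k ≥ 1`, `b^k ∈ orb(c) ↔ D ∣ k`. -/
theorem D_properties (m : ℕ) (hm : 1 ≤ m) (e : ZMod m) (he : Idem m e)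
    (b c : ZMod m) (hb : b ∈ Rme m e) (hc : c ∈ Rme m e)
    (D : ℕ) (hD : D = ((Finset.Icc 1 (ord m b)).filter (fun n => b ^ n ∈ orb m c)).gcd id) :
    D ∣ ord m b ∧ b ^ D ∈ orb m c ∧
      ∀ k : ℕ, 1 ≤ k → (b ^ k ∈ orb m c ↔ D ∣ k) := by
  have : NeZero m := ⟨by omega⟩
  obtain ⟨hbreg, rfl⟩ := hb
  obtain ⟨hcreg, hce⟩ := hc
  have ht : 0 < ord m b := ord_pos b
  have hidem : IsIdempotentElem (b ^ ord m b) := by rw [IsIdempotentElem, ← sq]; exact he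
  have htS : b ^ ord m b ∈ orbSubsemigroup hcreg := hce ▸ pow_mem_orb hcreg (ord_pos c)
  set P := powExponents (orbSubsemigroup hcreg) b (ord m b) hidem htS
  have hmemP : ∀ {n}, 0 < n → (n ∈ P ↔ b ^ n ∈ orb m c) := mem_powExponents_iff hbreg hidem htS
  have htP : ord m b ∈ P := (hmemP ht).2 htS
  classical
  have hdvd_iff : ∀ k, D ∣ k ↔ k ∈ P := by
    rw [hD, Finset.filter_congr fun n hn => (hmemP (Finset.mem_Icc.1 hn).1).symm]
    exact AddSubmonoid.gcd_filter_mem_dvd_iff ht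
      (fun n => (pow_add_mem_powExponents_iff hidem htS).1) htP
  have hD0 : 0 < D := Nat.pos_of_dvd_of_pos ((hdvd_iff _).2 htP) ht
  exact ⟨(hdvd_iff _).2 htP, (hmemP hD0).1 ((hdvd_iff D).1 dvd_rfl),
    fun k hk => (hmemP hk).symm.trans (hdvd_iff k).symm⟩
end

section
/- Let e be idempotent mod m, b, c ∈ R_m^e, and D = D_m(b,c) = gcd{n : 1 ≤ n ≤ |b|_m, b^n ∈ orb(c)}. Then orb(b) ∩ orb(c) = orb(b^D) and |orb(b) ∩ orb(c)| = |b|_m / D. -/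
lemma pow_add_mul_eq_of_pow_add_eq {M : Type*} [Monoid M] {a : M} {i p : ℕ}
    (h : a ^ (i + p) = a ^ i) {n : ℕ} (hn : i ≤ n) (k : ℕ) : a ^ (n + k * p) = a ^ n := by
  have hi : ∀ k : ℕ, a ^ (i + k * p) = a ^ i := by
    intro k
    induction k with
    | zero => simp
    | succ k ih => rw [add_mul, one_mul, ← add_assoc, pow_add, ih, ← pow_add, h]
  obtain ⟨r, rfl⟩ := Nat.exists_eq_add_of_le hn
  rw [add_right_comm, pow_add, hi, ← pow_add]

lemma Nat.sInf_dvd_of_sub_mem {S : Set ℕ} (hpos : ∀ n ∈ S, 0 < n)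
    (hsub : ∀ s ∈ S, ∀ t ∈ S, t < s → s - t ∈ S) {n : ℕ} (hn : n ∈ S) : sInf S ∣ n := by
  induction n using Nat.strong_induction_on with
  | _ n ih =>
    have hle : sInf S ≤ n := Nat.sInf_le hn
    rcases hle.eq_or_lt with heq | hlt
    · rw [heq]
    · have hmem : sInf S ∈ S := Nat.sInf_mem ⟨n, hn⟩
      have hdvd := ih (n - sInf S) (by have := hpos _ hmem; omega) (hsub n hn _ hmem hlt)
      exact (Nat.dvd_sub_iff_left hle dvd_rfl).1 hdvd

section Orbits

variable {m : ℕ} {a b c x : ZMod m}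

lemma exists_idem_pow [NeZero m] (a : ZMod m) : ∃ n, 1 ≤ n ∧ Idem m (a ^ n) := by
  obtain ⟨i, j, hne, hij⟩ := Finite.exists_ne_map_eq_of_infinite (a ^ · : ℕ → ZMod m)
  wlog hlt : i < j generalizing i j
  · exact this j i hne.symm hij.symm (by omega)
  have hper : a ^ (i + (j - i)) = a ^ i := by rw [Nat.add_sub_cancel' hlt.le]; exact hij.symm
  have hp : 1 ≤ j - i := by omega
  refine ⟨(i + 1) * (j - i), Nat.mul_pos i.succ_pos hp, ?_⟩
  rw [Idem, ← pow_mul, mul_two]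
  exact pow_add_mul_eq_of_pow_add_eq hper ((Nat.le_succ i).trans (Nat.le_mul_of_pos_right _ hp)) _

lemma one_le_ord [NeZero m] (a : ZMod m) : 1 ≤ ord m a :=
  (Nat.sInf_mem (exists_idem_pow a)).1

lemma idem_pow_ord [NeZero m] (a : ZMod m) : Idem m (a ^ ord m a) :=
  (Nat.sInf_mem (exists_idem_pow a)).2

lemma ord_le {n : ℕ} (hn : 1 ≤ n) (h : Idem m (a ^ n)) : ord m a ≤ n :=
  Nat.sInf_le ⟨hn, h⟩

lemma ord_eq_of_minimal [NeZero m] {k : ℕ} (hk : 1 ≤ k) (h : Idem m (a ^ k))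
    (hmin : ∀ n, 1 ≤ n → Idem m (a ^ n) → k ≤ n) : ord m a = k :=
  (ord_le hk h).antisymm (hmin _ (one_le_ord a) (idem_pow_ord a))

lemma pos_of_ord_eq_mul [NeZero m] {d k : ℕ} (h : ord m a = d * k) : 0 < d ∧ 0 < k :=
  CanonicallyOrderedAdd.mul_pos.1 (by rw [← h]; exact one_le_ord a)

lemma mem_orb : x ∈ orb m a ↔ ∃ j, (1 ≤ j ∧ j ≤ ord m a) ∧ a ^ j = x := by
  simp [orb]

lemma ord_pow_of_ord_eq_mul [NeZero m] {d k : ℕ} (h : ord m a = d * k) : ord m (a ^ d) = k := by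
  have hdk := pos_of_ord_eq_mul h
  refine ord_eq_of_minimal hdk.2 (by rw [← pow_mul, ← h]; exact idem_pow_ord a) ?_
  intro n hn hidem
  have hle : ord m a ≤ d * n := ord_le (Nat.mul_pos hdk.1 hn) (by rwa [pow_mul])
  rw [h] at hle
  exact Nat.le_of_mul_le_mul_left hle hdk.1

namespace Reg

lemma pow_add_mul_ord (ha : Reg m a) {n : ℕ} (hn : 1 ≤ n) (k : ℕ) :
    a ^ (n + k * ord m a) = a ^ n :=
  pow_add_mul_eq_of_pow_add_eq (by rw [pow_one, add_comm]; exact ha) hn k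

lemma pow_add_ord (ha : Reg m a) {n : ℕ} (hn : 1 ≤ n) : a ^ (n + ord m a) = a ^ n := by
  simpa using ha.pow_add_mul_ord hn 1

lemma pow_mem_orb [NeZero m] (ha : Reg m a) {n : ℕ} (hn : 1 ≤ n) : a ^ n ∈ orb m a := by
  have hN := one_le_ord a
  refine mem_orb.2 ⟨(n - 1) % ord m a + 1, ⟨by omega, Nat.mod_lt _ (by omega)⟩, ?_⟩
  rw [← ha.pow_add_mul_ord (by omega) ((n - 1) / ord m a)]
  have := Nat.mod_add_div' (n - 1) (ord m a)
  congr 1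
  omega

lemma pow_injOn [NeZero m] (ha : Reg m a) : Set.InjOn (a ^ ·) (Set.Icc 1 (ord m a)) := by
  suffices h : ∀ i j, 1 ≤ i → i < j → j ≤ ord m a → a ^ i ≠ a ^ j by
    intro i hi j hj hij
    by_contra hne
    rcases Nat.lt_or_gt_of_ne hne with hlt | hlt
    exacts [h i j hi.1 hlt hj.2 hij, h j i hj.1 hlt hi.2 hij.symm]
  intro i j hi hij hj heq
  have hidem : a ^ (j - i) = a ^ ord m a := calc
    a ^ (j - i) = a ^ (j - i + ord m a) := (ha.pow_add_ord (by omega)).symm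
    _ = a ^ j * a ^ (ord m a - i) := by rw [← pow_add]; congr 1; omega
    _ = a ^ ord m a := by rw [← heq, ← pow_add]; congr 1; omega
  have := ord_le (by omega : 1 ≤ j - i) (hidem ▸ idem_pow_ord a)
  omega

lemma card_orb [NeZero m] (ha : Reg m a) : (orb m a).card = ord m a := by
  rw [orb, Finset.card_image_of_injOn (by simpa using ha.pow_injOn), Nat.card_Icc,
    Nat.add_sub_cancel]

lemma pow [NeZero m] (ha : Reg m a) {d k : ℕ} (h : ord m a = d * k) : Reg m (a ^ d) := by
  have hd : 1 ≤ d := (pos_of_ord_eq_mul h).1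
  rw [Reg, ord_pow_of_ord_eq_mul h, ← pow_mul, mul_add_one, ← h, add_comm]
  exact ha.pow_add_ord hd

end Reg

lemma mul_mem_orb [NeZero m] (hc : Reg m c) {x y : ZMod m} (hx : x ∈ orb m c)
    (hy : y ∈ orb m c) : x * y ∈ orb m c := by
  obtain ⟨i, hi, rfl⟩ := mem_orb.1 hx
  obtain ⟨j, hj, rfl⟩ := mem_orb.1 hy
  rw [← pow_add]
  exact hc.pow_mem_orb (by omega)

lemma pow_mem_orb_of_mem [NeZero m] (hc : Reg m c) (hx : x ∈ orb m c) {n : ℕ} (hn : 1 ≤ n) :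
    x ^ n ∈ orb m c := by
  obtain ⟨i, hi, rfl⟩ := mem_orb.1 hx
  rw [← pow_mul]
  exact hc.pow_mem_orb (Nat.mul_pos hi.1 hn)

lemma exists_mul_eq_pow_ord [NeZero m] (hc : Reg m c) (hx : x ∈ orb m c) :
    ∃ y ∈ orb m c, x * y = c ^ ord m c := by
  obtain ⟨j, hj, rfl⟩ := mem_orb.1 hx
  obtain ⟨M, hM⟩ := Nat.exists_eq_add_of_le' (one_le_ord c)
  refine ⟨c ^ (M * j + ord m c), hc.pow_mem_orb (by omega), ?_⟩
  rw [← pow_add, ← hc.pow_add_mul_ord (one_le_ord c) j, hM]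
  congr 1
  ring

lemma pow_sub_mem_orb [NeZero m] (hb : Reg m b) (hc : Reg m c)
    (hbc : b ^ ord m b = c ^ ord m c) {s t : ℕ} (hts : t < s) (hs : b ^ s ∈ orb m c)
    (ht : b ^ t ∈ orb m c) :
    b ^ (s - t) ∈ orb m c := by
  obtain ⟨y, hy, hty⟩ := exists_mul_eq_pow_ord hc ht
  have hst : b ^ (s - t) = b ^ s * y := calc
    b ^ (s - t) = b ^ (s - t + ord m b) := (hb.pow_add_ord (by omega)).symm
    _ = b ^ (s - t) * (b ^ t * y) := by rw [pow_add, hbc, hty]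
    _ = b ^ s * y := by rw [← mul_assoc, ← pow_add, Nat.sub_add_cancel hts.le]
  rw [hst]
  exact mul_mem_orb hc hs hy

lemma pow_mem_orb_iff_dvd [NeZero m] (hb : Reg m b) (hc : Reg m c)
    (hbc : b ^ ord m b = c ^ ord m c) (n : ℕ) (hn : 1 ≤ n) :
    b ^ n ∈ orb m c ↔ sInf {n | 1 ≤ n ∧ b ^ n ∈ orb m c} ∣ n := by
  set S := {n | 1 ≤ n ∧ b ^ n ∈ orb m c}
  have hS : sInf S ∈ S :=
    Nat.sInf_mem ⟨ord m b, one_le_ord b, hbc ▸ hc.pow_mem_orb (one_le_ord c)⟩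
  constructor
  · intro h
    refine Nat.sInf_dvd_of_sub_mem (fun n hn => hn.1) (fun s hs t ht hts => ?_) ⟨hn, h⟩
    exact ⟨by omega, pow_sub_mem_orb hb hc hbc hts hs.2 ht.2⟩
  · rintro ⟨j, rfl⟩
    rw [pow_mul]
    exact pow_mem_orb_of_mem hc hS.2 (Nat.pos_of_mul_pos_left hn)

lemma orb_inter_eq_orb_pow [NeZero m] {s : Finset (ZMod m)} {d k : ℕ}
    (hk : ord m b = d * k) (hd : ∀ n, 1 ≤ n → (b ^ n ∈ s ↔ d ∣ n)) :
    orb m b ∩ s = orb m (b ^ d) := by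
  have hd1 : 0 < d := (pos_of_ord_eq_mul hk).1
  ext x
  simp only [Finset.mem_inter, mem_orb, ord_pow_of_ord_eq_mul hk, hk]
  constructor
  · rintro ⟨⟨n, ⟨hn1, hnk⟩, rfl⟩, hx⟩
    obtain ⟨j, rfl⟩ := (hd n hn1).1 hx
    exact ⟨j, ⟨Nat.pos_of_mul_pos_left hn1, Nat.le_of_mul_le_mul_left hnk hd1⟩,
      (pow_mul b d j).symm⟩
  · rintro ⟨j, ⟨hj1, hjk⟩, rfl⟩
    rw [← pow_mul]
    exact ⟨⟨d * j, ⟨Nat.mul_pos hd1 hj1, Nat.mul_le_mul_left d hjk⟩, rfl⟩,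
      (hd _ (Nat.mul_pos hd1 hj1)).2 (dvd_mul_right d j)⟩

end Orbits

theorem orb_inter_orb_general (m : ℕ) (hm : 1 ≤ m) (e : ZMod m)
    (b c : ZMod m) (hb : b ∈ Rme m e) (hc : c ∈ Rme m e)
    (D : ℕ) (hD : D = ((Finset.Icc 1 (ord m b)).filter (fun n => b ^ n ∈ orb m c)).gcd id) :
    orb m b ∩ orb m c = orb m (b ^ D) ∧
      (orb m b ∩ orb m c).card = ord m b / D := by
  have : NeZero m := ⟨by omega⟩
  obtain ⟨hbreg, hbe⟩ := hb
  obtain ⟨hcreg, hce⟩ := hc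
  have hmem := pow_mem_orb_iff_dvd hbreg hcreg (hbe.trans hce.symm)
  set d := sInf {n | 1 ≤ n ∧ b ^ n ∈ orb m c}
  obtain ⟨k, hk⟩ : d ∣ ord m b :=
    (hmem _ (one_le_ord b)).1 (hbe ▸ hce ▸ hcreg.pow_mem_orb (one_le_ord c))
  have hdk := pos_of_ord_eq_mul hk
  have hDd : D = d := by
    rw [hD]
    refine Nat.dvd_antisymm (Finset.gcd_dvd ?_) (Finset.dvd_gcd fun n hn => ?_)
    · rw [Finset.mem_filter, Finset.mem_Icc, hk]
      exact ⟨⟨hdk.1, Nat.le_mul_of_pos_right d hdk.2⟩, (hmem _ hdk.1).2 dvd_rfl⟩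
    · rw [Finset.mem_filter, Finset.mem_Icc] at hn
      exact (hmem _ hn.1.1).1 hn.2
  subst hDd
  have hinter := orb_inter_eq_orb_pow hk hmem
  refine ⟨hinter, ?_⟩
  rw [hinter, (hbreg.pow hk).card_orb, ord_pow_of_ord_eq_mul hk, hk,
    Nat.mul_div_cancel_left _ hdk.1]

/-- With `D = D_m(b,c)`: `orb(b) ∩ orb(c) = orb(b^D)` and
`|orb(b) ∩ orb(c)| = |b|_m / D`. -/
theorem orb_inter_orb (m : ℕ) (hm : 1 ≤ m) (e : ZMod m) (he : Idem m e)
    (b c : ZMod m) (hb : b ∈ Rme m e) (hc : c ∈ Rme m e)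
    (D : ℕ) (hD : D = ((Finset.Icc 1 (ord m b)).filter (fun n => b ^ n ∈ orb m c)).gcd id) :
    orb m b ∩ orb m c = orb m (b ^ D) ∧
      (orb m b ∩ orb m c).card = ord m b / D :=
  orb_inter_orb_general m hm e b c hb hc D hD
end

section
/- Let m ≥ 1, a regular mod m, k ≥ 1, and define ω_m(a) = max{|b|_m : b regular mod m and b^i ≡ a (mod m) for some i ≥ 1}. Then the congruence x^k ≡ a (mod m) has a solution x if and only if a^(ω_m(a)/gcd(k, ω_m(a))) is idempotent modulo m. -/
/-- `ω_m(a)`: the largest order `|b|_m` over regular `b` with `a` a power of `b`. -/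
noncomputable def omegaOrd (m : ℕ) (a : ZMod m) : ℕ :=
  sSup {n | ∃ b : ZMod m, (∃ j > 1, b ^ j = b) ∧ (∃ i ≥ 1, b ^ i = a) ∧ ord m b = n}


/-!
A regular residue `a` lies in the maximal subgroup `H_e` of the multiplicative monoid `ℤ/m` at its
idempotent power `e`, realised as the group of units of the monoid `e ℤ/m`. Every regular `b` having
`a` as a power lies in the same `H_e`, and `|b|_m` is the order of `b` there, so the theorem is a
statement about the finite abelian group `H_e`. If `g` has the largest order `ω` among the elements
whose cyclic subgroup contains `a`, then every such element `x` has order dividing `ω`: otherwise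
combining the `p`-parts of `x` and `g` gives an element of order `lcm(|x|, ω) > ω` whose cyclic
subgroup still contains `a`. Hence `a = x^k` forces `a^(ω/gcd(k, ω)) = x^lcm(k, ω) = 1`; conversely
`a^(ω/gcd(k, ω)) = 1` puts `a` in `⟨g^gcd(k, ω)⟩ ⊆ ⟨g^k⟩`.
-/

open Subgroup

section Group

variable {G : Type*} [Group G]

theorem mem_zpowers_pow_orderOf_div {x z : G} {n : ℕ} (hn : n ∣ orderOf x) (hn0 : n ≠ 0)
    (hz : z ∈ zpowers x) (hzn : z ^ n = 1) : z ∈ zpowers (x ^ (orderOf x / n)) := by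
  obtain ⟨j, rfl⟩ := mem_zpowers_iff.mp hz
  have hdvd : ((orderOf x / n : ℕ) : ℤ) * n ∣ j * n := by
    rw [← Nat.cast_mul, Nat.div_mul_cancel hn, orderOf_dvd_iff_zpow_eq_one, zpow_mul,
      zpow_natCast, hzn]
  obtain ⟨c, rfl⟩ := (mul_dvd_mul_iff_right (Nat.cast_ne_zero.mpr hn0)).mp hdvd
  rw [zpow_mul, zpow_natCast]
  exact zpow_mem (mem_zpowers _) c

theorem exists_mul_eq_of_orderOf_dvd_mul {A : G} {n₁ n₂ : ℕ} (hc : n₁.Coprime n₂)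
    (hA : orderOf A ∣ n₁ * n₂) :
    ∃ A₁ ∈ zpowers A, ∃ A₂ ∈ zpowers A, A₁ ^ n₁ = 1 ∧ A₂ ^ n₂ = 1 ∧ A₁ * A₂ = A := by
  obtain ⟨α, β, hαβ⟩ := Nat.isCoprime_iff_coprime.mpr hc
  have hA' : (orderOf A : ℤ) ∣ n₁ * n₂ := by exact_mod_cast hA
  refine ⟨A ^ (β * n₂), zpow_mem (mem_zpowers A) _, A ^ (α * n₁), zpow_mem (mem_zpowers A) _,
    ?_, ?_, ?_⟩
  · rw [← zpow_natCast, ← zpow_mul, ← orderOf_dvd_iff_zpow_eq_one]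
    exact hA'.trans ⟨β, by ring⟩
  · rw [← zpow_natCast, ← zpow_mul, ← orderOf_dvd_iff_zpow_eq_one]
    exact hA'.trans ⟨α, by ring⟩
  · rw [← zpow_add, add_comm, hαβ, zpow_one]

end Group

section CommGroup

variable {G : Type*} [CommGroup G]

theorem mem_zpowers_mul_of_coprime_left {u w : G} (hc : (orderOf u).Coprime (orderOf w)) :
    u ∈ zpowers (u * w) := by
  have hu : u ∈ zpowers (u ^ orderOf w) := mem_zpowers_pow_iff.mpr hc.symm
  rw [← mul_one (u ^ orderOf w), ← pow_orderOf_eq_one w, ← mul_pow] at hu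
  exact zpowers_le.mpr (pow_mem (mem_zpowers _) _) hu

theorem mem_zpowers_mul_of_coprime {u w y z : G} (hc : (orderOf u).Coprime (orderOf w))
    (hy : y ∈ zpowers u) (hz : z ∈ zpowers w) : y * z ∈ zpowers (u * w) := by
  have hw : w ∈ zpowers (u * w) := mul_comm w u ▸ mem_zpowers_mul_of_coprime_left hc.symm
  exact mul_mem (zpowers_le.mpr (mem_zpowers_mul_of_coprime_left hc) hy) (zpowers_le.mpr hw hz)

theorem mem_zpowers_mul_pow_orderOf_div {A x g : G} {n₁ n₂ : ℕ} (hx : orderOf x ≠ 0)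
    (hg : orderOf g ≠ 0) (hn₁ : n₁ ∣ orderOf x) (hn₂ : n₂ ∣ orderOf g) (hc : n₁.Coprime n₂)
    (hA : orderOf A ∣ n₁ * n₂) (hAx : A ∈ zpowers x) (hAg : A ∈ zpowers g) :
    A ∈ zpowers (x ^ (orderOf x / n₁) * g ^ (orderOf g / n₂)) := by
  obtain ⟨A₁, hA₁, A₂, hA₂, h₁, h₂, rfl⟩ := exists_mul_eq_of_orderOf_dvd_mul hc hA
  refine mem_zpowers_mul_of_coprime ?_
    (mem_zpowers_pow_orderOf_div hn₁ (ne_zero_of_dvd_ne_zero hx hn₁) (zpowers_le.mpr hAx hA₁) h₁)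
    (mem_zpowers_pow_orderOf_div hn₂ (ne_zero_of_dvd_ne_zero hg hn₂) (zpowers_le.mpr hAg hA₂) h₂)
  rwa [orderOf_pow_orderOf_div hx hn₁, orderOf_pow_orderOf_div hg hn₂]

theorem orderOf_dvd_of_forall_orderOf_le {A x g : G} (hx : orderOf x ≠ 0) (hg : orderOf g ≠ 0)
    (hAx : A ∈ zpowers x) (hAg : A ∈ zpowers g)
    (hmax : ∀ h, A ∈ zpowers h → orderOf h ≤ orderOf g) : orderOf x ∣ orderOf g := by
  have hA : orderOf A ∣ Nat.factorizationLCMLeft (orderOf x) (orderOf g) *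
      Nat.factorizationLCMRight (orderOf x) (orderOf g) := by
    rw [Nat.factorizationLCMLeft_mul_factorizationLCMRight hx hg]
    exact (orderOf_dvd_of_mem_zpowers hAx).trans (Nat.dvd_lcm_left _ _)
  have hle := hmax _ (mem_zpowers_mul_pow_orderOf_div hx hg
    (Nat.factorizationLCMLeft_dvd_left _ _) (Nat.factorizationLCMRight_dvd_right _ _)
    (Nat.coprime_factorizationLCMLeft_factorizationLCMRight _ _) hA hAx hAg)
  rw [(Commute.all x g).orderOf_mul_pow_eq_lcm hx hg] at hle
  have hlcm : Nat.lcm (orderOf x) (orderOf g) = orderOf g :=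
    le_antisymm hle (Nat.le_of_dvd (Nat.lcm_pos (Nat.pos_of_ne_zero hx) (Nat.pos_of_ne_zero hg))
      (Nat.dvd_lcm_right _ _))
  exact hlcm ▸ Nat.dvd_lcm_left _ _

variable [Finite G]

theorem exists_orderOf_eq_sSup (A : G) :
    ∃ g, A ∈ zpowers g ∧ orderOf g = sSup {n | ∃ h : G, A ∈ zpowers h ∧ orderOf h = n} ∧
      ∀ h, A ∈ zpowers h → orderOf h ≤ orderOf g := by
  set S := {n | ∃ h : G, A ∈ zpowers h ∧ orderOf h = n}
  have hS : BddAbove S :=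
    ((Set.finite_range orderOf).subset <| by rintro _ ⟨h, -, rfl⟩; exact ⟨h, rfl⟩).bddAbove
  obtain ⟨g, hAg, hg⟩ : sSup S ∈ S := Nat.sSup_mem ⟨_, A, mem_zpowers A, rfl⟩ hS
  exact ⟨g, hAg, hg, fun h hAh => hg ▸ le_csSup hS ⟨h, hAh, rfl⟩⟩

theorem exists_pow_eq_iff_of_forall_orderOf_le {A g : G} (hAg : A ∈ zpowers g)
    (hmax : ∀ h, A ∈ zpowers h → orderOf h ≤ orderOf g) (k : ℕ) :
    (∃ x, x ^ k = A) ↔ A ^ (orderOf g / k.gcd (orderOf g)) = 1 := by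
  have hg := (orderOf_pos g).ne'
  have hd : k.gcd (orderOf g) ∣ orderOf g := Nat.gcd_dvd_right _ _
  constructor
  · rintro ⟨x, rfl⟩
    have hxg := orderOf_dvd_of_forall_orderOf_le (orderOf_pos x).ne' hg
      (pow_mem (mem_zpowers x) k) hAg hmax
    rw [← pow_mul, ← orderOf_dvd_iff_pow_eq_one, ← Nat.mul_div_assoc _ hd]
    exact hxg.trans (Nat.dvd_lcm_right k _)
  · intro hA
    have hq : orderOf g / k.gcd (orderOf g) ≠ 0 :=
      (Nat.div_pos (Nat.le_of_dvd (Nat.pos_of_ne_zero hg) hd) (Nat.gcd_pos_of_pos_right _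
        (Nat.pos_of_ne_zero hg))).ne'
    have hAd := mem_zpowers_pow_orderOf_div (Nat.div_dvd_of_dvd hd) hq hAg hA
    rw [Nat.div_div_self hd hg] at hAd
    -- Bézout, using `g ^ orderOf g = 1`
    have hdk : g ^ k.gcd (orderOf g) ∈ zpowers (g ^ k) := by
      refine mem_zpowers_iff.mpr ⟨Nat.gcdA k (orderOf g), ?_⟩
      rw [← zpow_natCast g (k.gcd _), Nat.gcd_eq_gcd_ab, zpow_add, zpow_mul, zpow_mul,
        zpow_natCast, zpow_natCast, pow_orderOf_eq_one, one_zpow, mul_one]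
    obtain ⟨j, hj⟩ := mem_zpowers_iff.mp (zpowers_le.mpr hdk hAd)
    refine ⟨g ^ j, ?_⟩
    rw [← hj, ← zpow_natCast, ← zpow_mul, ← zpow_natCast, ← zpow_mul, mul_comm]

end CommGroup

section Monoid

variable {M : Type*} [Monoid M] {b : M}

theorem isIdempotentElem_pow_pred {n : ℕ} (hn : 1 < n) (hb : b ^ n = b) :
    IsIdempotentElem (b ^ (n - 1)) := by
  rw [IsIdempotentElem, ← pow_add, show n - 1 + (n - 1) = n - 2 + n by omega, pow_add, hb,
    ← pow_succ, show n - 2 + 1 = n - 1 by omega]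

theorem pow_eq_pow_of_isIdempotentElem {i j : ℕ} (hi : i ≠ 0) (hj : j ≠ 0)
    (h₁ : IsIdempotentElem (b ^ i)) (h₂ : IsIdempotentElem (b ^ j)) : b ^ i = b ^ j := by
  rw [← h₁.pow_eq hj, ← pow_mul, mul_comm, pow_mul, h₂.pow_eq hi]

end Monoid

/-- The monoid `e M` with identity `e`; its group of units is the maximal subgroup of `M` at `e`. -/
@[ext]
structure LocalMonoid {M : Type*} [CommMonoid M] (e : {e : M // IsIdempotentElem e}) where
  val : M
  val_mul_idem : val * e = val

namespace LocalMonoid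

variable {M : Type*} [CommMonoid M] {e : {e : M // IsIdempotentElem e}}

instance : CommMonoid (LocalMonoid e) where
  mul x y := ⟨x.val * y.val, by rw [mul_assoc, y.val_mul_idem]⟩
  one := ⟨e, e.2.eq⟩
  mul_assoc _ _ _ := LocalMonoid.ext (mul_assoc _ _ _)
  one_mul x := LocalMonoid.ext (by rw [← x.val_mul_idem]; exact mul_comm _ _)
  mul_one x := LocalMonoid.ext x.val_mul_idem
  mul_comm _ _ := LocalMonoid.ext (mul_comm _ _)
  npow n x := ⟨e * x.val ^ n, by rw [mul_right_comm, e.2.eq]⟩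
  npow_zero x := LocalMonoid.ext (by
    change (e : M) * x.val ^ 0 = e
    rw [pow_zero, mul_one])
  npow_succ n x := LocalMonoid.ext (by
    change (e : M) * x.val ^ (n + 1) = (e : M) * x.val ^ n * x.val
    rw [pow_succ, mul_assoc])

theorem val_pow_of_ne_zero (x : LocalMonoid e) {n : ℕ} (hn : n ≠ 0) :
    (x ^ n).val = x.val ^ n := by
  obtain ⟨n, rfl⟩ := Nat.exists_eq_add_one_of_ne_zero hn
  change (e : M) * x.val ^ (n + 1) = x.val ^ (n + 1)
  rw [pow_succ', ← mul_assoc, mul_comm (e : M), x.val_mul_idem]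

instance [Finite M] : Finite (LocalMonoid e) :=
  .of_injective val fun _ _ => LocalMonoid.ext

theorem isIdempotentElem_units_val_iff (u : (LocalMonoid e)ˣ) :
    IsIdempotentElem u.val.val ↔ u = 1 := by
  rw [← Units.val_eq_one, ← IsIdempotentElem.iff_eq_one_of_isUnit u.isUnit]
  exact ⟨fun h => LocalMonoid.ext h, fun h => congrArg val h⟩

theorem isUnit_mk_of_pow_eq {b : M} (hb : b * e = b) {n : ℕ} (hn : n ≠ 0) (hbn : b ^ n = e) :
    IsUnit (⟨b, hb⟩ : LocalMonoid e) :=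
  IsUnit.of_pow_eq_one (LocalMonoid.ext (by rw [val_pow_of_ne_zero _ hn]; exact hbn)) hn

theorem exists_units_val_eq_of_pow_eq {b : M} {n : ℕ} (hn : 1 < n) (hb : b ^ n = b) :
    ∃ e : {e : M // IsIdempotentElem e}, ∃ u : (LocalMonoid e)ˣ, u.val.val = b := by
  have hbe : b * b ^ (n - 1) = b := by rw [← pow_succ', Nat.sub_add_cancel hn.le, hb]
  exact ⟨⟨_, isIdempotentElem_pow_pred hn hb⟩,
    (isUnit_mk_of_pow_eq hbe (by omega) rfl).unit, rfl⟩

theorem units_val_pow_orderOf_succ [Finite M] (u : (LocalMonoid e)ˣ) :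
    u.val.val ^ (orderOf u + 1) = u.val.val := by
  rw [← val_pow_of_ne_zero _ (Nat.succ_ne_zero _), ← Units.val_pow_eq_pow_val, pow_succ,
    pow_orderOf_eq_one, one_mul]

theorem exists_units_pow_eq_of_pow_eq [Finite M] {b : M} {n : ℕ} (hn : 1 < n) (hb : b ^ n = b)
    {i : ℕ} (hi : i ≠ 0) (A : (LocalMonoid e)ˣ) (hbA : b ^ i = A.val.val) :
    ∃ u : (LocalMonoid e)ˣ, u.val.val = b ∧ u ^ i = A := by
  have hA : A.val.val ^ orderOf A = e := by
    rw [← val_pow_of_ne_zero _ (orderOf_pos A).ne', ← Units.val_pow_eq_pow_val,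
      pow_orderOf_eq_one]
    rfl
  have hbe : b ^ (n - 1) = e := by
    rw [← hA, ← hbA, ← pow_mul]
    refine pow_eq_pow_of_isIdempotentElem (by omega)
      (Nat.mul_ne_zero hi (orderOf_pos A).ne') (isIdempotentElem_pow_pred hn hb) ?_
    rw [pow_mul, hbA, hA]
    exact e.2
  have hu := isUnit_mk_of_pow_eq (by rw [← hbe, ← pow_succ', Nat.sub_add_cancel hn.le, hb])
    (by omega) hbe
  refine ⟨hu.unit, rfl, Units.ext (LocalMonoid.ext ?_)⟩
  rw [Units.val_pow_eq_pow_val, val_pow_of_ne_zero _ hi, IsUnit.unit_spec]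
  exact hbA

theorem exists_pow_eq_units_val_iff {k : ℕ} (hk : k ≠ 0) (A : (LocalMonoid e)ˣ) :
    (∃ x : M, x ^ k = A.val.val) ↔ ∃ X : (LocalMonoid e)ˣ, X ^ k = A := by
  constructor
  · rintro ⟨x, hx⟩
    let X : LocalMonoid e := ⟨e * x, by rw [mul_right_comm, e.2.eq]⟩
    have hX : X ^ k = A := LocalMonoid.ext <| by
      rw [val_pow_of_ne_zero _ hk]
      change ((e : M) * x) ^ k = _
      rw [mul_pow, e.2.pow_eq hk, hx, mul_comm, A.val.val_mul_idem]
    have hXu : IsUnit X := (isUnit_pow_iff hk).mp (hX ▸ A.isUnit)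
    exact ⟨hXu.unit, Units.ext hX⟩
  · rintro ⟨X, rfl⟩
    exact ⟨X.val.val, by rw [Units.val_pow_eq_pow_val, val_pow_of_ne_zero _ hk]⟩

end LocalMonoid

section ZMod

variable {m : ℕ} {e : {e : ZMod m // IsIdempotentElem e}}

theorem idem_iff_isIdempotentElem {x : ZMod m} : Idem m x ↔ IsIdempotentElem x := by
  rw [Idem, sq]
  rfl

theorem idem_units_val_pow_iff (u : (LocalMonoid e)ˣ) {n : ℕ} (hn : n ≠ 0) :
    Idem m (u.val.val ^ n) ↔ u ^ n = 1 := by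
  rw [idem_iff_isIdempotentElem, ← LocalMonoid.val_pow_of_ne_zero _ hn, ← Units.val_pow_eq_pow_val,
    LocalMonoid.isIdempotentElem_units_val_iff]

variable [NeZero m]

theorem ord_units_val (u : (LocalMonoid e)ˣ) : ord m u.val.val = orderOf u := by
  have hu : orderOf u ∈ {n | 1 ≤ n ∧ Idem m (u.val.val ^ n)} :=
    ⟨orderOf_pos u, (idem_units_val_pow_iff u (orderOf_pos u).ne').mpr (pow_orderOf_eq_one u)⟩
  obtain ⟨h₁, h₂⟩ : ord m u.val.val ∈ {n | 1 ≤ n ∧ Idem m (u.val.val ^ n)} := Nat.sInf_mem ⟨_, hu⟩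
  exact le_antisymm (Nat.sInf_le hu)
    (orderOf_le_of_pow_eq_one h₁ ((idem_units_val_pow_iff u (by omega)).mp h₂))

theorem exists_regular_pow_eq_iff (A : (LocalMonoid e)ˣ) (n : ℕ) :
    (∃ b : ZMod m, (∃ j > 1, b ^ j = b) ∧ (∃ i ≥ 1, b ^ i = A.val.val) ∧ ord m b = n) ↔
      ∃ g : (LocalMonoid e)ˣ, A ∈ zpowers g ∧ orderOf g = n := by
  constructor
  · rintro ⟨b, ⟨j, hj, hbj⟩, ⟨i, hi, hbi⟩, rfl⟩
    obtain ⟨g, rfl, hgA⟩ := LocalMonoid.exists_units_pow_eq_of_pow_eq hj hbj (by omega) A hbi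
    exact ⟨g, hgA ▸ pow_mem (mem_zpowers g) i, (ord_units_val g).symm⟩
  · rintro ⟨g, hAg, rfl⟩
    obtain ⟨i, hgA : g ^ i = A⟩ := mem_powers_iff_mem_zpowers.mpr hAg
    have hg := orderOf_pos g
    refine ⟨g.val.val, ⟨orderOf g + 1, by omega, LocalMonoid.units_val_pow_orderOf_succ g⟩,
      ⟨i + orderOf g, by omega, ?_⟩, ord_units_val g⟩
    rw [← LocalMonoid.val_pow_of_ne_zero _ (by omega),
      ← Units.val_pow_eq_pow_val, pow_add, pow_orderOf_eq_one, mul_one, hgA]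

end ZMod

/-- Generalization of Euler's Criterion: for `a` regular mod `m` and `k ≥ 1`,
`x^k ≡ a (mod m)` is solvable iff `a^(ω_m(a)/gcd(k, ω_m(a)))` is idempotent. -/
theorem euler_criterion_generalization (m : ℕ) (hm : 1 ≤ m) (a : ZMod m)
    (ha : ∃ n > 1, a ^ n = a) (k : ℕ) (hk : 1 ≤ k) :
    (∃ x : ZMod m, x ^ k = a) ↔
      Idem m (a ^ (omegaOrd m a / Nat.gcd k (omegaOrd m a))) := by
  have : NeZero m := ⟨by omega⟩
  obtain ⟨n, hn, han⟩ := ha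
  obtain ⟨e, A, rfl⟩ := LocalMonoid.exists_units_val_eq_of_pow_eq hn han
  obtain ⟨g, hAg, hω, hmax⟩ := exists_orderOf_eq_sSup A
  have hωg : omegaOrd m A.val.val = orderOf g := by
    simp only [omegaOrd, exists_regular_pow_eq_iff, hω]
  have hq : orderOf g / k.gcd (orderOf g) ≠ 0 :=
    (Nat.div_pos (Nat.gcd_le_right _ (orderOf_pos g)) (Nat.gcd_pos_of_pos_left _ hk)).ne'
  rw [hωg, idem_units_val_pow_iff A hq, LocalMonoid.exists_pow_eq_units_val_iff (by omega)]
  exact exists_pow_eq_iff_of_forall_orderOf_le hAg hmax k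
end
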